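/- Let $u$ and $v$ be Borel probability measures on $\mathbb{R}$ with finite second moments, with quantile functions $G_u$ and $G_v$. Then the squared $L^2$-Wasserstein distance, defined as the infimum over all couplings $\pi$ of $u$ and $v$ of $\int_{\mathbb{R}\times\mathbb{R}} (x-y)^2\, d\pi(x,y)$, equals $\int_0^1 (G_u(p) - G_v(p))^2\, dp$. -/

import Mathlib

open MeasureTheory Set

/-- Cumulative distribution function of a measure on `ℝ`. -/
noncomputable def cdfFn (u : Measure ℝ) (x : ℝ) : ℝ := (u (Iic x)).toReal

/-- Quantile function (generalized inverse cdf) of a measure on `ℝ`. -/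
noncomputable def quantileFn (u : Measure ℝ) (p : ℝ) : ℝ := sInf {x : ℝ | p ≤ cdfFn u x}

open ProbabilityTheory Filter
open scoped Topology

set_option linter.unusedSectionVars false

section Quantile
variable (u : Measure ℝ) [IsProbabilityMeasure u]

lemma cdfFn_eq (x : ℝ) : cdfFn u x = cdf u x := (cdf_eq_real u x).symm

lemma quantile_set_nonempty {p : ℝ} (hp1 : p < 1) : {x : ℝ | p ≤ cdfFn u x}.Nonempty := by
  have h := (tendsto_cdf_atTop u).eventually (eventually_ge_nhds hp1)
  rcases h.exists with ⟨x, hx⟩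
  exact ⟨x, by simpa [cdfFn_eq] using hx⟩

lemma quantile_set_bddBelow {p : ℝ} (hp0 : 0 < p) : BddBelow {x : ℝ | p ≤ cdfFn u x} := by
  have h := (tendsto_cdf_atBot u).eventually (eventually_lt_nhds hp0)
  rcases h.exists with ⟨x, hx⟩
  refine ⟨x, fun y hy => ?_⟩
  by_contra hxy
  push_neg at hxy
  have : cdf u y ≤ cdf u x := monotone_cdf u hxy.le
  have : p ≤ cdf u x := le_trans (by simpa [cdfFn_eq] using hy) this
  exact absurd this (not_le.2 hx)

lemma quantile_le_iff {p x : ℝ} (hp0 : 0 < p) (hp1 : p < 1) :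
    quantileFn u p ≤ x ↔ p ≤ cdfFn u x := by
  constructor
  · intro h
    have hmem : p ≤ cdfFn u (quantileFn u p) := by
      have key : ∀ y, quantileFn u p < y → p ≤ cdf u y := by
        intro y hy
        obtain ⟨z, hz, hzy⟩ := exists_lt_of_csInf_lt (quantile_set_nonempty u hp1) hy
        exact le_trans (by simpa [cdfFn_eq] using hz) (monotone_cdf u hzy.le)
      have hrc : Tendsto (cdf u) (𝓝[>] (quantileFn u p)) (𝓝 (cdf u (quantileFn u p))) := by
        have := (cdf u).right_continuous (quantileFn u p)
        exact this.tendsto.mono_left (nhdsWithin_mono _ Ioi_subset_Ici_self)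
      have := ge_of_tendsto hrc (eventually_nhdsWithin_of_forall (fun y hy => key y hy))
      simpa [cdfFn_eq] using this
    calc p ≤ cdfFn u (quantileFn u p) := hmem
    _ ≤ cdfFn u x := by simpa [cdfFn_eq] using monotone_cdf u h
  · intro h
    exact csInf_le (quantile_set_bddBelow u hp0) h

lemma quantile_monotoneOn : MonotoneOn (quantileFn u) (Ioo (0:ℝ) 1) := by
  intro p hp q hq hpq
  exact csInf_le_csInf (quantile_set_bddBelow u hp.1) (quantile_set_nonempty u hq.2)
    (fun x hx => le_trans hpq hx)

lemma quantile_aemeasurable : AEMeasurable (quantileFn u) (volume.restrict (Ioo (0:ℝ) 1)) :=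
  aemeasurable_restrict_of_monotoneOn measurableSet_Ioo (quantile_monotoneOn u)

lemma cdfFn_nonneg (x : ℝ) : 0 ≤ cdfFn u x := ENNReal.toReal_nonneg

lemma cdfFn_le_one (x : ℝ) : cdfFn u x ≤ 1 := by
  rw [cdfFn_eq]; exact cdf_le_one u x

lemma ofReal_cdfFn (x : ℝ) : ENNReal.ofReal (cdfFn u x) = u (Iic x) := by
  rw [cdfFn_eq]; exact ofReal_cdf u x

lemma map_quantile : (volume.restrict (Ioo (0:ℝ) 1)).map (quantileFn u) = u := by
  have hprob : IsProbabilityMeasure (volume.restrict (Ioo (0:ℝ) 1)) :=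
    ⟨by simp [Real.volume_Ioo]⟩
  have : IsProbabilityMeasure ((volume.restrict (Ioo (0:ℝ) 1)).map (quantileFn u)) :=
    Measure.isProbabilityMeasure_map (quantile_aemeasurable u)
  refine Measure.ext_of_Iic _ _ (fun x => ?_)
  rw [Measure.map_apply_of_aemeasurable (quantile_aemeasurable u) measurableSet_Iic,
    Measure.restrict_apply' measurableSet_Ioo]
  have hset : quantileFn u ⁻¹' (Iic x) ∩ Ioo 0 1 = Iic (cdfFn u x) ∩ Ioo 0 1 := by
    ext p
    simp only [mem_inter_iff, mem_preimage, mem_Iic, mem_Ioo, and_congr_left_iff]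
    intro hp
    rw [quantile_le_iff u hp.1 hp.2]
  rw [hset]
  by_cases hc : (1:ℝ) ≤ cdfFn u x
  · have h1 : Iic (cdfFn u x) ∩ Ioo (0:ℝ) 1 = Ioo 0 1 := by
      apply inter_eq_self_of_subset_right
      intro p hp; exact le_trans hp.2.le hc
    have hc1 : cdfFn u x = 1 := le_antisymm (cdfFn_le_one u x) hc
    have h2 : u (Iic x) = 1 := by
      rw [← ofReal_cdfFn u x, hc1, ENNReal.ofReal_one]
    rw [h1, h2, Real.volume_Ioo]; simp
  · push_neg at hc
    have h1 : Iic (cdfFn u x) ∩ Ioo (0:ℝ) 1 = Ioc 0 (cdfFn u x) := by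
      ext p
      simp only [mem_inter_iff, mem_Iic, mem_Ioo, mem_Ioc]
      constructor
      · rintro ⟨h, h0, _⟩; exact ⟨h0, h⟩
      · rintro ⟨h0, h⟩; exact ⟨h, h0, lt_of_le_of_lt h hc⟩
    rw [h1, Real.volume_Ioc, sub_zero, ofReal_cdfFn]

end Quantile

section Coupling
variable (u v : Measure ℝ) [IsProbabilityMeasure u] [IsProbabilityMeasure v]

/-- the uniform measure on (0,1) -/
local notation "lam" => volume.restrict (Ioo (0:ℝ) 1)

instance : IsProbabilityMeasure (volume.restrict (Ioo (0:ℝ) 1)) := ⟨by simp [Real.volume_Ioo]⟩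

/-- the monotone (quantile) coupling -/
noncomputable def monoCoupling : Measure (ℝ × ℝ) :=
  (volume.restrict (Ioo (0:ℝ) 1)).map (fun p => (quantileFn u p, quantileFn v p))

lemma pair_aemeasurable :
    AEMeasurable (fun p => (quantileFn u p, quantileFn v p)) lam :=
  (quantile_aemeasurable u).prodMk (quantile_aemeasurable v)

instance : IsProbabilityMeasure (monoCoupling u v) :=
  Measure.isProbabilityMeasure_map (pair_aemeasurable u v)

lemma monoCoupling_fst : (monoCoupling u v).map Prod.fst = u := by
  rw [monoCoupling, AEMeasurable.map_map_of_aemeasurable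
    measurable_fst.aemeasurable (pair_aemeasurable u v)]
  exact map_quantile u

lemma monoCoupling_snd : (monoCoupling u v).map Prod.snd = v := by
  rw [monoCoupling, AEMeasurable.map_map_of_aemeasurable
    measurable_snd.aemeasurable (pair_aemeasurable u v)]
  exact map_quantile v

lemma measure_Ioi_eq (s : ℝ) : u (Ioi s) = ENNReal.ofReal (1 - cdfFn u s) := by
  have h : Ioi s = (Iic s)ᶜ := by simp
  rw [h, measure_compl measurableSet_Iic (measure_ne_top u _), measure_univ,
    ← ofReal_cdfFn u s, ← ENNReal.ofReal_one, ← ENNReal.ofReal_sub _ (cdfFn_nonneg u s)]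

lemma monoCoupling_prod_Ioi (s t : ℝ) :
    monoCoupling u v (Ioi s ×ˢ Ioi t) = min (u (Ioi s)) (v (Ioi t)) := by
  rw [monoCoupling, Measure.map_apply_of_aemeasurable (pair_aemeasurable u v)
    (measurableSet_Ioi.prod measurableSet_Ioi), Measure.restrict_apply' measurableSet_Ioo]
  have hset : (fun p => (quantileFn u p, quantileFn v p)) ⁻¹' (Ioi s ×ˢ Ioi t) ∩ Ioo 0 1
      = Ioi (max (cdfFn u s) (cdfFn v t)) ∩ Ioo 0 1 := by
    ext p
    simp only [mem_inter_iff, mem_preimage, mem_prod, mem_Ioi, mem_Ioo, and_congr_left_iff,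
      max_lt_iff]
    intro hp
    rw [← not_le, ← not_le, ← not_le, ← not_le, ← not_or]
    rw [quantile_le_iff u hp.1 hp.2, quantile_le_iff v hp.1 hp.2]
    tauto
  rw [hset]
  have hmax0 : 0 ≤ max (cdfFn u s) (cdfFn v t) := le_max_of_le_left (cdfFn_nonneg u s)
  rw [measure_Ioi_eq u s, measure_Ioi_eq v t]
  by_cases hm : max (cdfFn u s) (cdfFn v t) < 1
  · have h1 : Ioi (max (cdfFn u s) (cdfFn v t)) ∩ Ioo (0:ℝ) 1
        = Ioo (max (cdfFn u s) (cdfFn v t)) 1 := by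
      ext p
      simp only [mem_inter_iff, mem_Ioi, mem_Ioo]
      constructor
      · rintro ⟨h, _, h1⟩; exact ⟨h, h1⟩
      · rintro ⟨h, h1⟩; exact ⟨h, lt_of_le_of_lt hmax0 h, h1⟩
    rw [h1, Real.volume_Ioo]
    rcases le_total (cdfFn u s) (cdfFn v t) with h | h
    · rw [max_eq_right h, min_eq_right (ENNReal.ofReal_le_ofReal (by linarith))]
    · rw [max_eq_left h, min_eq_left (ENNReal.ofReal_le_ofReal (by linarith))]
  · push_neg at hm
    have h1 : Ioi (max (cdfFn u s) (cdfFn v t)) ∩ Ioo (0:ℝ) 1 = ∅ := by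
      ext p
      simp only [mem_inter_iff, mem_Ioi, mem_Ioo, mem_empty_iff_false, iff_false, not_and]
      intro h h0 h2; linarith
    rw [h1, measure_empty]
    rcases le_total (cdfFn u s) (cdfFn v t) with h | h
    · have : (1:ℝ) ≤ cdfFn v t := le_trans hm (by rw [max_eq_right h])
      rw [min_eq_right (ENNReal.ofReal_le_ofReal (by linarith))]
      symm; rw [ENNReal.ofReal_eq_zero]; linarith
    · have : (1:ℝ) ≤ cdfFn u s := le_trans hm (by rw [max_eq_left h])
      rw [min_eq_left (ENNReal.ofReal_le_ofReal (by linarith))]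
      symm; rw [ENNReal.ofReal_eq_zero]; linarith

lemma coupling_prod_Ioi_le (π : Measure (ℝ × ℝ)) (h1 : π.map Prod.fst = u)
    (h2 : π.map Prod.snd = v) (s t : ℝ) :
    π (Ioi s ×ˢ Ioi t) ≤ min (u (Ioi s)) (v (Ioi t)) := by
  refine le_min ?_ ?_
  · have : Ioi s ×ˢ Ioi t ⊆ Prod.fst ⁻¹' (Ioi s) := fun q hq => hq.1
    refine le_trans (measure_mono this) ?_
    rw [← h1, Measure.map_apply measurable_fst measurableSet_Ioi]
  · have : Ioi s ×ˢ Ioi t ⊆ Prod.snd ⁻¹' (Ioi t) := fun q hq => hq.2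
    refine le_trans (measure_mono this) ?_
    rw [← h2, Measure.map_apply measurable_snd measurableSet_Ioi]

end Coupling

section Gfun

/-- `gfun x s = 1_{s<x} - 1_{s<0}`, so that `∫ s, gfun x s ds = x`. -/
noncomputable def gfun (x s : ℝ) : ℝ := (if s < x then 1 else 0) - (if s < 0 then 1 else 0)

lemma gfun_eq_of_nonneg {x : ℝ} (hx : 0 ≤ x) : gfun x = (Ico (0:ℝ) x).indicator 1 := by
  funext s
  simp only [gfun, indicator_apply, mem_Ico, Pi.one_apply]
  split_ifs <;> simp_all <;> linarith

lemma gfun_eq_of_neg {x : ℝ} (hx : x < 0) : gfun x = fun s => -((Ico x (0:ℝ)).indicator 1 s) := by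
  funext s
  simp only [gfun, indicator_apply, mem_Ico, Pi.one_apply]
  split_ifs <;> simp_all <;> linarith

lemma integrable_gfun (x : ℝ) : Integrable (gfun x) volume := by
  rcases le_or_gt 0 x with hx | hx
  · rw [gfun_eq_of_nonneg hx]
    exact (integrable_indicator_iff measurableSet_Ico).2
      (integrableOn_const (by rw [Real.volume_Ico]; exact ENNReal.ofReal_ne_top))
  · rw [gfun_eq_of_neg hx]
    exact ((integrable_indicator_iff measurableSet_Ico).2
      (integrableOn_const (by rw [Real.volume_Ico]; exact ENNReal.ofReal_ne_top))).neg

lemma integral_gfun (x : ℝ) : ∫ s, gfun x s = x := by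
  rcases le_or_gt 0 x with hx | hx
  · rw [gfun_eq_of_nonneg hx, MeasureTheory.integral_indicator_one measurableSet_Ico,
      measureReal_def, Real.volume_Ico, ENNReal.toReal_ofReal (by linarith)]
    ring
  · rw [gfun_eq_of_neg hx]
    rw [integral_neg, MeasureTheory.integral_indicator_one measurableSet_Ico,
      measureReal_def, Real.volume_Ico, ENNReal.toReal_ofReal (by linarith)]
    ring

lemma integral_abs_gfun (x : ℝ) : ∫ s, |gfun x s| = |x| := by
  rcases le_or_gt 0 x with hx | hx
  · have : (fun s => |gfun x s|) = gfun x := by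
      funext s; rw [gfun_eq_of_nonneg hx]; simp only [indicator_apply, Pi.one_apply]
      split <;> simp
    rw [this, integral_gfun, abs_of_nonneg hx]
  · have : (fun s => |gfun x s|) = fun s => -gfun x s := by
      funext s; rw [gfun_eq_of_neg hx]; simp only [indicator_apply, Pi.one_apply]
      split <;> simp
    rw [this, integral_neg, integral_gfun, abs_of_neg hx]

lemma measurable_gfun_prod :
    Measurable (fun q : (ℝ × ℝ) × (ℝ × ℝ) => gfun q.1.1 q.2.1 * gfun q.1.2 q.2.2) := by
  unfold gfun
  apply Measurable.mul <;>
  · apply Measurable.sub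
    · exact (Measurable.ite (measurableSet_lt (by fun_prop) (by fun_prop))
        measurable_const measurable_const)
    · exact (Measurable.ite (measurableSet_lt (by fun_prop) measurable_const)
        measurable_const measurable_const)

end Gfun

section Key
variable (u v : Measure ℝ) [IsProbabilityMeasure u] [IsProbabilityMeasure v]
variable (π : Measure (ℝ × ℝ)) [IsProbabilityMeasure π]

lemma coupling_fst_sq_integrable (h1 : π.map Prod.fst = u)
    (hu : Integrable (fun x => x ^ 2) u) : Integrable (fun q : ℝ × ℝ => q.1 ^ 2) π := by
  have h : Integrable (fun x => x ^ 2) (π.map Prod.fst) := h1 ▸ hu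
  rw [integrable_map_measure (by fun_prop) measurable_fst.aemeasurable] at h
  exact h

lemma coupling_snd_sq_integrable (h2 : π.map Prod.snd = v)
    (hv : Integrable (fun x => x ^ 2) v) : Integrable (fun q : ℝ × ℝ => q.2 ^ 2) π := by
  have h : Integrable (fun x => x ^ 2) (π.map Prod.snd) := h2 ▸ hv
  rw [integrable_map_measure (by fun_prop) measurable_snd.aemeasurable] at h
  exact h

lemma coupling_abs_mul_integrable (h1 : π.map Prod.fst = u) (h2 : π.map Prod.snd = v)
    (hu : Integrable (fun x => x ^ 2) u) (hv : Integrable (fun x => x ^ 2) v) :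
    Integrable (fun q : ℝ × ℝ => |q.1| * |q.2|) π := by
  have hsum := (coupling_fst_sq_integrable u π h1 hu).add
    (coupling_snd_sq_integrable v π h2 hv)
  refine hsum.mono' (measurable_fst.abs.mul measurable_snd.abs).aestronglyMeasurable
    (Filter.Eventually.of_forall (fun q => ?_))
  have h : ‖|q.1| * |q.2|‖ = |q.1| * |q.2| :=
    Real.norm_of_nonneg (mul_nonneg (abs_nonneg _) (abs_nonneg _))
  rw [h]
  show |q.1| * |q.2| ≤ q.1 ^ 2 + q.2 ^ 2
  nlinarith [sq_nonneg (|q.1| - |q.2|), sq_abs q.1, sq_abs q.2, abs_nonneg q.1, abs_nonneg q.2]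

lemma coupling_mul_integrable (h1 : π.map Prod.fst = u) (h2 : π.map Prod.snd = v)
    (hu : Integrable (fun x => x ^ 2) u) (hv : Integrable (fun x => x ^ 2) v) :
    Integrable (fun q : ℝ × ℝ => q.1 * q.2) π := by
  refine (coupling_abs_mul_integrable u v π h1 h2 hu hv).mono' (by fun_prop)
    (Filter.Eventually.of_forall (fun q => ?_))
  rw [Real.norm_eq_abs, abs_mul]

lemma key_integrable (h1 : π.map Prod.fst = u) (h2 : π.map Prod.snd = v)
    (hu : Integrable (fun x => x ^ 2) u) (hv : Integrable (fun x => x ^ 2) v) :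
    Integrable (Function.uncurry fun q w : ℝ × ℝ => gfun q.1 w.1 * gfun q.2 w.2)
      (π.prod volume) := by
  have hmeas : Measurable (Function.uncurry fun q w : ℝ × ℝ => gfun q.1 w.1 * gfun q.2 w.2) :=
    measurable_gfun_prod
  rw [integrable_prod_iff hmeas.aestronglyMeasurable]
  constructor
  · refine Filter.Eventually.of_forall (fun q => ?_)
    show Integrable (fun w : ℝ × ℝ => gfun q.1 w.1 * gfun q.2 w.2) volume
    rw [Measure.volume_eq_prod]
    exact (integrable_gfun q.1).mul_prod (integrable_gfun q.2)
  · have heq : (fun q : ℝ × ℝ => ∫ w : ℝ × ℝ, ‖gfun q.1 w.1 * gfun q.2 w.2‖)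
        = fun q : ℝ × ℝ => |q.1| * |q.2| := by
      funext q
      have h : (fun w : ℝ × ℝ => ‖gfun q.1 w.1 * gfun q.2 w.2‖)
          = fun w : ℝ × ℝ => |gfun q.1 w.1| * |gfun q.2 w.2| := by
        funext w; rw [Real.norm_eq_abs, abs_mul]
      rw [h, Measure.volume_eq_prod,
        integral_prod_mul (f := fun s => |gfun q.1 s|) (g := fun t => |gfun q.2 t|),
        integral_abs_gfun, integral_abs_gfun]
    simp only [Function.uncurry_apply_pair]
    rw [heq]
    exact coupling_abs_mul_integrable u v π h1 h2 hu hv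

lemma integral_mul_eq_K (h1 : π.map Prod.fst = u) (h2 : π.map Prod.snd = v)
    (hu : Integrable (fun x => x ^ 2) u) (hv : Integrable (fun x => x ^ 2) v) :
    ∫ q : ℝ × ℝ, q.1 * q.2 ∂π
      = ∫ w : ℝ × ℝ, (∫ q : ℝ × ℝ, gfun q.1 w.1 * gfun q.2 w.2 ∂π) := by
  have hinner : ∀ q : ℝ × ℝ, (∫ w : ℝ × ℝ, gfun q.1 w.1 * gfun q.2 w.2) = q.1 * q.2 := by
    intro q
    rw [Measure.volume_eq_prod, integral_prod_mul, integral_gfun, integral_gfun]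
  calc ∫ q : ℝ × ℝ, q.1 * q.2 ∂π
      = ∫ q : ℝ × ℝ, (∫ w : ℝ × ℝ, gfun q.1 w.1 * gfun q.2 w.2) ∂π :=
        (integral_congr_ae (Filter.Eventually.of_forall fun q => (hinner q))).symm
    _ = ∫ w : ℝ × ℝ, (∫ q : ℝ × ℝ, gfun q.1 w.1 * gfun q.2 w.2 ∂π) :=
        integral_integral_swap (key_integrable u v π h1 h2 hu hv)

lemma K_integrable (h1 : π.map Prod.fst = u) (h2 : π.map Prod.snd = v)
    (hu : Integrable (fun x => x ^ 2) u) (hv : Integrable (fun x => x ^ 2) v) :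
    Integrable (fun w : ℝ × ℝ => ∫ q : ℝ × ℝ, gfun q.1 w.1 * gfun q.2 w.2 ∂π) volume := by
  have h := (key_integrable u v π h1 h2 hu hv).swap
  exact h.integral_prod_left

lemma K_eval (h1 : π.map Prod.fst = u) (h2 : π.map Prod.snd = v) (w : ℝ × ℝ) :
    ∫ q : ℝ × ℝ, gfun q.1 w.1 * gfun q.2 w.2 ∂π
      = (π (Ioi w.1 ×ˢ Ioi w.2)).toReal
        - (if w.2 < 0 then 1 else 0) * (u (Ioi w.1)).toReal
        - (if w.1 < 0 then 1 else 0) * (v (Ioi w.2)).toReal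
        + (if w.1 < 0 then 1 else 0) * (if w.2 < 0 then 1 else 0) := by
  set c1 : ℝ := if w.1 < 0 then 1 else 0 with hc1
  set c2 : ℝ := if w.2 < 0 then 1 else 0 with hc2
  have hpt : ∀ q : ℝ × ℝ, gfun q.1 w.1 * gfun q.2 w.2
      = (Ioi w.1 ×ˢ Ioi w.2).indicator 1 q
        - c2 * ((Ioi w.1 ×ˢ (univ : Set ℝ)).indicator 1 q)
        - c1 * (((univ : Set ℝ) ×ˢ Ioi w.2).indicator 1 q)
        + c1 * c2 := by
    intro q
    by_cases ha : w.1 < q.1 <;> by_cases hb : w.2 < q.2 <;>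
        by_cases hs : w.1 < 0 <;> by_cases ht : w.2 < 0 <;>
      simp [gfun, indicator_apply, mem_prod, mem_Ioi, ha, hb, hs, ht, hc1, hc2] <;> ring
  have hiA : Integrable ((Ioi w.1 ×ˢ Ioi w.2).indicator (1 : ℝ × ℝ → ℝ)) π :=
    (integrable_indicator_iff (measurableSet_Ioi.prod measurableSet_Ioi)).2
      (integrableOn_const (measure_ne_top _ _))
  have hiB : Integrable ((Ioi w.1 ×ˢ (univ : Set ℝ)).indicator (1 : ℝ × ℝ → ℝ)) π :=
    (integrable_indicator_iff (measurableSet_Ioi.prod MeasurableSet.univ)).2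
      (integrableOn_const (measure_ne_top _ _))
  have hiC : Integrable (((univ : Set ℝ) ×ˢ Ioi w.2).indicator (1 : ℝ × ℝ → ℝ)) π :=
    (integrable_indicator_iff (MeasurableSet.univ.prod measurableSet_Ioi)).2
      (integrableOn_const (measure_ne_top _ _))
  rw [show (fun q : ℝ × ℝ => gfun q.1 w.1 * gfun q.2 w.2)
      = fun q => (Ioi w.1 ×ˢ Ioi w.2).indicator 1 q
        - c2 * ((Ioi w.1 ×ˢ (univ : Set ℝ)).indicator 1 q)
        - c1 * (((univ : Set ℝ) ×ˢ Ioi w.2).indicator 1 q)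
        + c1 * c2 from funext hpt]
  have hI2 : Integrable (fun q : ℝ × ℝ => (Ioi w.1 ×ˢ Ioi w.2).indicator 1 q
      - c2 * ((Ioi w.1 ×ˢ (univ : Set ℝ)).indicator 1 q)) π := hiA.sub (hiB.const_mul c2)
  have hI1 : Integrable (fun q : ℝ × ℝ => (Ioi w.1 ×ˢ Ioi w.2).indicator 1 q
      - c2 * ((Ioi w.1 ×ˢ (univ : Set ℝ)).indicator 1 q)
      - c1 * (((univ : Set ℝ) ×ˢ Ioi w.2).indicator 1 q)) π := hI2.sub (hiC.const_mul c1)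
  rw [integral_add hI1 (integrable_const _),
    integral_sub hI2 (hiC.const_mul c1),
    integral_sub hiA (hiB.const_mul c2), integral_const_mul, integral_const_mul,
    MeasureTheory.integral_indicator_one (measurableSet_Ioi.prod measurableSet_Ioi),
    MeasureTheory.integral_indicator_one (measurableSet_Ioi.prod MeasurableSet.univ),
    MeasureTheory.integral_indicator_one (MeasurableSet.univ.prod measurableSet_Ioi),
    integral_const, probReal_univ, measureReal_def, measureReal_def, measureReal_def]
  have hBu : π (Ioi w.1 ×ˢ (univ : Set ℝ)) = u (Ioi w.1) := by
    rw [prod_univ, ← Measure.map_apply measurable_fst measurableSet_Ioi, h1]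
  have hCv : π ((univ : Set ℝ) ×ˢ Ioi w.2) = v (Ioi w.2) := by
    rw [univ_prod, ← Measure.map_apply measurable_snd measurableSet_Ioi, h2]
  rw [hBu, hCv]
  simp

end Key

section Final
variable (u v : Measure ℝ) [IsProbabilityMeasure u] [IsProbabilityMeasure v]

lemma cost_integrable (π : Measure (ℝ × ℝ)) [IsProbabilityMeasure π]
    (h1 : π.map Prod.fst = u) (h2 : π.map Prod.snd = v)
    (hu : Integrable (fun x => x ^ 2) u) (hv : Integrable (fun x => x ^ 2) v) :
    Integrable (fun q : ℝ × ℝ => (q.1 - q.2) ^ 2) π := by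
  have hA := coupling_fst_sq_integrable u π h1 hu
  have hB := coupling_snd_sq_integrable v π h2 hv
  have hM := coupling_mul_integrable u v π h1 h2 hu hv
  have heq : (fun q : ℝ × ℝ => (q.1 - q.2) ^ 2)
      = fun q : ℝ × ℝ => q.1 ^ 2 + q.2 ^ 2 - 2 * (q.1 * q.2) := by
    funext q; ring
  rw [heq]
  exact (hA.add hB).sub (hM.const_mul 2)

lemma cost_expand (π : Measure (ℝ × ℝ)) [IsProbabilityMeasure π]
    (h1 : π.map Prod.fst = u) (h2 : π.map Prod.snd = v)
    (hu : Integrable (fun x => x ^ 2) u) (hv : Integrable (fun x => x ^ 2) v) :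
    ∫ q : ℝ × ℝ, (q.1 - q.2) ^ 2 ∂π
      = (∫ x, x ^ 2 ∂u) + (∫ x, x ^ 2 ∂v) - 2 * ∫ q : ℝ × ℝ, q.1 * q.2 ∂π := by
  have hA := coupling_fst_sq_integrable u π h1 hu
  have hB := coupling_snd_sq_integrable v π h2 hv
  have hM := coupling_mul_integrable u v π h1 h2 hu hv
  have heq : (fun q : ℝ × ℝ => (q.1 - q.2) ^ 2)
      = fun q : ℝ × ℝ => (q.1 ^ 2 + q.2 ^ 2) - 2 * (q.1 * q.2) := by
    funext q; ring
  have hfst : ∫ q : ℝ × ℝ, q.1 ^ 2 ∂π = ∫ x, x ^ 2 ∂u := by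
    rw [← h1, integral_map measurable_fst.aemeasurable (by fun_prop)]
  have hsnd : ∫ q : ℝ × ℝ, q.2 ^ 2 ∂π = ∫ x, x ^ 2 ∂v := by
    rw [← h2, integral_map measurable_snd.aemeasurable (by fun_prop)]
  have hAB : Integrable (fun q : ℝ × ℝ => q.1 ^ 2 + q.2 ^ 2) π := hA.add hB
  have hM2 : Integrable (fun q : ℝ × ℝ => 2 * (q.1 * q.2)) π := hM.const_mul 2
  rw [heq, integral_sub hAB hM2, integral_add hA hB, integral_const_mul, hfst, hsnd]

lemma integral_mul_le_mono (π : Measure (ℝ × ℝ)) [IsProbabilityMeasure π]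
    (h1 : π.map Prod.fst = u) (h2 : π.map Prod.snd = v)
    (hu : Integrable (fun x => x ^ 2) u) (hv : Integrable (fun x => x ^ 2) v) :
    ∫ q : ℝ × ℝ, q.1 * q.2 ∂π ≤ ∫ q : ℝ × ℝ, q.1 * q.2 ∂(monoCoupling u v) := by
  rw [integral_mul_eq_K u v π h1 h2 hu hv,
    integral_mul_eq_K u v (monoCoupling u v) (monoCoupling_fst u v) (monoCoupling_snd u v) hu hv]
  refine integral_mono (K_integrable u v π h1 h2 hu hv)
    (K_integrable u v (monoCoupling u v) (monoCoupling_fst u v) (monoCoupling_snd u v) hu hv)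
    (fun w => ?_)
  rw [K_eval u v π h1 h2 w, K_eval u v (monoCoupling u v)
    (monoCoupling_fst u v) (monoCoupling_snd u v) w]
  have hle : π (Ioi w.1 ×ˢ Ioi w.2) ≤ monoCoupling u v (Ioi w.1 ×ˢ Ioi w.2) := by
    rw [monoCoupling_prod_Ioi]
    exact coupling_prod_Ioi_le u v π h1 h2 w.1 w.2
  have := ENNReal.toReal_mono (measure_ne_top _ _) hle
  linarith

end Final


/-- The squared `L²`-Wasserstein distance between two probability measures on `ℝ` with
finite second moments, defined as the infimum over couplings of the quadratic transport
cost, equals the `L²` distance between their quantile functions on `(0,1)`. -/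
theorem wasserstein_sq_eq_icdf_dist_sq
    (u v : Measure ℝ) [IsProbabilityMeasure u] [IsProbabilityMeasure v]
    (hu : Integrable (fun x => x ^ 2) u) (hv : Integrable (fun x => x ^ 2) v) :
    (⨅ π : {π : Measure (ℝ × ℝ) // IsProbabilityMeasure π ∧
        π.map Prod.fst = u ∧ π.map Prod.snd = v},
      ∫⁻ q, ENNReal.ofReal ((q.1 - q.2) ^ 2) ∂π.1)
    = ∫⁻ p in Ioo (0:ℝ) 1, ENNReal.ofReal ((quantileFn u p - quantileFn v p) ^ 2) := by
  have hmeasf : Measurable (fun q : ℝ × ℝ => ENNReal.ofReal ((q.1 - q.2) ^ 2)) :=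
    (((measurable_fst.sub measurable_snd).pow_const 2)).ennreal_ofReal
  have hRHS : (∫⁻ p in Ioo (0:ℝ) 1, ENNReal.ofReal ((quantileFn u p - quantileFn v p) ^ 2))
      = ∫⁻ q, ENNReal.ofReal ((q.1 - q.2) ^ 2) ∂(monoCoupling u v) := by
    rw [monoCoupling, lintegral_map' hmeasf.aemeasurable (pair_aemeasurable u v)]
  have hlin : ∀ (π : Measure (ℝ × ℝ)) [IsProbabilityMeasure π],
      π.map Prod.fst = u → π.map Prod.snd = v →
      ∫⁻ q, ENNReal.ofReal ((q.1 - q.2) ^ 2) ∂π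
        = ENNReal.ofReal (∫ q : ℝ × ℝ, (q.1 - q.2) ^ 2 ∂π) := by
    intro π hprob h1 h2
    exact (ofReal_integral_eq_lintegral_ofReal (cost_integrable u v π h1 h2 hu hv)
      (Filter.Eventually.of_forall fun q => sq_nonneg _)).symm
  rw [hRHS]
  apply le_antisymm
  · exact iInf_le_of_le ⟨monoCoupling u v, inferInstance, monoCoupling_fst u v,
      monoCoupling_snd u v⟩ le_rfl
  · refine le_iInf fun π => ?_
    obtain ⟨π, hprob, h1, h2⟩ := π
    haveI := hprob
    show ∫⁻ q, ENNReal.ofReal ((q.1 - q.2) ^ 2) ∂(monoCoupling u v)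
      ≤ ∫⁻ q, ENNReal.ofReal ((q.1 - q.2) ^ 2) ∂π
    rw [hlin π h1 h2, hlin (monoCoupling u v) (monoCoupling_fst u v) (monoCoupling_snd u v)]
    apply ENNReal.ofReal_le_ofReal
    rw [cost_expand u v π h1 h2 hu hv,
      cost_expand u v (monoCoupling u v) (monoCoupling_fst u v) (monoCoupling_snd u v) hu hv]
    have := integral_mul_le_mono u v π h1 h2 hu hv
    linarith
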